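/- Gap between the posterior mean and the cutoff (binary case): there exist universal constants C_l, C_u > 0 such that for every x ≠ 0, every m ∈ [-1, 1] with x·m ≠ 0, and every message a ∈ {-1, 1}, letting Z = E[z' | z' > -x·m] if a = 1 and Z = E[z' | z' < -x·m] if a = -1 (truncated standard normal means): (i) if sgn(x·m)·a < 0 then C_l · min{1, 1/|x|} < a·(Z + x·m) < C_u; and (ii) if sgn(x·m)·a > 0 then C_l < a·(Z + x·m). -/

import Mathlib

open MeasureTheory ProbabilityTheory Set

noncomputable section

/-- Standard normal density. -/
def stdPdf (z : ℝ) : ℝ := Real.exp (-z ^ 2 / 2) / Real.sqrt (2 * Real.pi)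

/-- Standard normal cdf. -/
def stdCdf (c : ℝ) : ℝ := ∫ z in Set.Iio c, stdPdf z

/-- Mean of a standard normal truncated to `(c, ∞)`. -/
def truncMeanAbove (c : ℝ) : ℝ :=
  (∫ z in Set.Ioi c, z * stdPdf z) / (∫ z in Set.Ioi c, stdPdf z)

/-- Mean of a standard normal truncated to `(-∞, c)`. -/
def truncMeanBelow (c : ℝ) : ℝ :=
  (∫ z in Set.Iio c, z * stdPdf z) / (∫ z in Set.Iio c, stdPdf z)

/-- Mean of a standard normal truncated to `(a, b)`. -/
def truncMeanBetween (a b : ℝ) : ℝ :=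
  (∫ z in Set.Ioo a b, z * stdPdf z) / (∫ z in Set.Ioo a b, stdPdf z)

/-- Signum, with the (measure-zero) value at `0` set to `-1`. -/
def sgn (x : ℝ) : ℝ := if 0 < x then 1 else -1

/-- The standard normal measure on `ℝ`. -/
def stdNormal : Measure ℝ := gaussianReal 0 1

/-- The joint law of two independent standard normals. -/
def stdNormal2 : Measure (ℝ × ℝ) := stdNormal.prod stdNormal

/-- Uniform measure on `[-1, 1]` (the prior on the state θ). -/
def uniformState : Measure ℝ := (2 : ENNReal)⁻¹ • volume.restrict (Set.Icc (-1 : ℝ) 1)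

instance : IsProbabilityMeasure stdNormal := by unfold stdNormal; infer_instance
instance : IsProbabilityMeasure stdNormal2 := by unfold stdNormal2; infer_instance

lemma stdPdf_pos (z : ℝ) : 0 < stdPdf z := by unfold stdPdf; positivity

lemma stdPdf_eq (z : ℝ) : stdPdf z = (Real.sqrt (2 * Real.pi))⁻¹ * Real.exp (-(2⁻¹) * z ^ 2) := by
  unfold stdPdf; ring_nf

lemma integrable_stdPdf : Integrable stdPdf :=
  ((integrable_exp_neg_mul_sq (by norm_num : (0:ℝ) < 2⁻¹)).const_mul
    (Real.sqrt (2 * Real.pi))⁻¹).congr (ae_of_all _ fun z => (stdPdf_eq z).symm)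

lemma integrable_mul_stdPdf : Integrable (fun z => z * stdPdf z) :=
  (((integrable_mul_exp_neg_mul_sq (by norm_num : (0:ℝ) < 2⁻¹)).const_mul
    (Real.sqrt (2 * Real.pi))⁻¹)).congr (ae_of_all _ fun z => by simp only []; rw [stdPdf_eq]; ring)

def Sfun (c : ℝ) : ℝ := ∫ z in Set.Ioi c, stdPdf z

lemma Sfun_pos (c : ℝ) : 0 < Sfun c := by
  rw [Sfun, setIntegral_pos_iff_support_of_nonneg_ae
    (ae_of_all _ fun z => (stdPdf_pos z).le) integrable_stdPdf.integrableOn]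
  have : Function.support stdPdf = Set.univ := by
    ext z; simp [Function.mem_support, (stdPdf_pos z).ne']
  rw [this, Set.univ_inter]
  simp [Real.volume_Ioi]

lemma integral_stdPdf : ∫ z, stdPdf z = 1 := by
  have h := integral_gaussian (2⁻¹ : ℝ)
  have : ∫ z, stdPdf z = (Real.sqrt (2 * Real.pi))⁻¹ * ∫ z : ℝ, Real.exp (-(2⁻¹) * z ^ 2) := by
    rw [← integral_const_mul]
    exact integral_congr_ae (ae_of_all _ fun z => stdPdf_eq z)
  rw [this, h]
  rw [show (Real.pi / 2⁻¹) = 2 * Real.pi by ring]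
  rw [inv_mul_cancel₀ (Real.sqrt_ne_zero'.mpr (by positivity))]

lemma Sfun_le_one (c : ℝ) : Sfun c ≤ 1 := by
  rw [← integral_stdPdf, Sfun]
  exact setIntegral_le_integral integrable_stdPdf (ae_of_all _ fun z => (stdPdf_pos z).le)

lemma Sfun_anti {c d : ℝ} (h : c ≤ d) : Sfun d ≤ Sfun c :=
  setIntegral_mono_set integrable_stdPdf.integrableOn
    (ae_of_all _ fun z => (stdPdf_pos z).le) (HasSubset.Subset.eventuallyLE (Ioi_subset_Ioi h))

lemma hasDerivAt_neg_stdPdf (z : ℝ) : HasDerivAt (fun w => -stdPdf w) (z * stdPdf z) z := by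
  have h1 : HasDerivAt (fun w : ℝ => -w ^ 2 / 2) (-z) z := by
    have := ((hasDerivAt_pow 2 z).neg).div_const 2
    simpa using this.congr_deriv (by push_cast; ring)
  have h2 : HasDerivAt (fun w : ℝ => Real.exp (-w ^ 2 / 2)) (Real.exp (-z ^ 2 / 2) * (-z)) z :=
    (Real.hasDerivAt_exp _).comp z h1
  have h3 : HasDerivAt (fun w => stdPdf w) (Real.exp (-z ^ 2 / 2) * (-z) / Real.sqrt (2 * Real.pi)) z :=
    h2.div_const _
  have := h3.neg
  refine this.congr_deriv ?_
  unfold stdPdf; ring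

lemma tendsto_stdPdf_atTop : Filter.Tendsto stdPdf Filter.atTop (nhds 0) := by
  have h : Filter.Tendsto (fun z : ℝ => -z ^ 2 / 2) Filter.atTop Filter.atBot := by
    apply Filter.Tendsto.atBot_div_const (by norm_num)
    exact Filter.tendsto_neg_atTop_atBot.comp (Filter.tendsto_pow_atTop (by norm_num : (2:ℕ) ≠ 0))
  have := (Real.tendsto_exp_atBot).comp h
  have h2 : Filter.Tendsto (fun z : ℝ => Real.exp (-z ^ 2 / 2) / Real.sqrt (2 * Real.pi))
      Filter.atTop (nhds (0 / Real.sqrt (2 * Real.pi))) := this.div_const _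
  rw [zero_div] at h2
  exact h2

lemma intAbove (c : ℝ) : ∫ z in Set.Ioi c, z * stdPdf z = stdPdf c := by
  have := integral_Ioi_of_hasDerivAt_of_tendsto' (f := fun w => -stdPdf w)
    (f' := fun z => z * stdPdf z) (a := c) (m := 0)
    (fun x _ => hasDerivAt_neg_stdPdf x) integrable_mul_stdPdf.integrableOn
    (by simpa using tendsto_stdPdf_atTop.neg)
  simpa using this

lemma continuous_stdPdf : Continuous stdPdf := by
  unfold stdPdf
  exact ((Real.continuous_exp.comp (by continuity)).div_const _)

lemma mills_upper {u : ℝ} (hu : 0 < u) : Sfun u ≤ stdPdf u / u := by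
  have h : Sfun u ≤ ∫ z in Set.Ioi u, (z / u) * stdPdf z := by
    refine setIntegral_mono_on integrable_stdPdf.integrableOn ?_ measurableSet_Ioi ?_
    · have : Integrable (fun z => (1/u) * (z * stdPdf z)) := integrable_mul_stdPdf.const_mul _
      exact (this.congr (ae_of_all _ fun z => by ring)).integrableOn
    · intro z hz
      have hz1 : 1 ≤ z / u := (one_le_div hu).mpr (le_of_lt hz)
      nlinarith [stdPdf_pos z]
  have h2 : ∫ z in Set.Ioi u, (z / u) * stdPdf z = (1/u) * ∫ z in Set.Ioi u, z * stdPdf z := by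
    rw [← integral_const_mul]
    exact setIntegral_congr_fun measurableSet_Ioi (fun z _ => by ring)
  rw [h2, intAbove] at h
  have he : (1/u) * stdPdf u = stdPdf u / u := by ring
  linarith

lemma hasDerivAt_mills (z : ℝ) (hz : z ≠ 0) :
    HasDerivAt (fun w => -stdPdf w / w) (stdPdf z + stdPdf z / z ^ 2) z := by
  have := (hasDerivAt_neg_stdPdf z).div (hasDerivAt_id z) hz
  refine this.congr_deriv ?_
  simp only [id]
  field_simp
  ring

lemma integral_mills {u : ℝ} (hu : 0 < u) :
    ∫ z in Set.Ioi u, (stdPdf z + stdPdf z / z ^ 2) = stdPdf u / u := by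
  have hint : IntegrableOn (fun z => stdPdf z + stdPdf z / z ^ 2) (Set.Ioi u) := by
    refine Integrable.mono' ((integrable_stdPdf.const_mul (1 + 1/u^2)).integrableOn) ?_ ?_
    · exact (Measurable.aestronglyMeasurable (continuous_stdPdf.measurable.add
        (continuous_stdPdf.measurable.div ((measurable_id.pow_const 2))))).restrict
    · filter_upwards [ae_restrict_mem measurableSet_Ioi] with z hz
      have hz0 : u < z := hz
      have h1 : (0:ℝ) < z := lt_trans hu hz0
      have h2 : stdPdf z / z ^ 2 ≤ stdPdf z / u ^ 2 := by
        apply div_le_div_of_nonneg_left (stdPdf_pos z).le (by positivity)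
        nlinarith
      have := stdPdf_pos z
      rw [Real.norm_eq_abs, abs_of_pos (by positivity)]
      rw [show (1 + 1/u^2) * stdPdf z = stdPdf z + stdPdf z / u^2 by ring]
      linarith
  have := integral_Ioi_of_hasDerivAt_of_tendsto' (f := fun w => -stdPdf w / w)
    (f' := fun z => stdPdf z + stdPdf z / z ^ 2) (a := u) (m := 0)
    (fun x hx => hasDerivAt_mills x (ne_of_gt (lt_of_lt_of_le hu hx))) hint
    (Filter.Tendsto.div_atTop tendsto_stdPdf_atTop.neg Filter.tendsto_id)
  rw [this]
  field_simp
  ring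

lemma mills_lower {u : ℝ} (hu : 0 < u) : u * stdPdf u / (u ^ 2 + 1) ≤ Sfun u := by
  have hint : IntegrableOn (fun z => stdPdf z + stdPdf z / z ^ 2) (Set.Ioi u) := by
    refine Integrable.mono' ((integrable_stdPdf.const_mul (1 + 1/u^2)).integrableOn) ?_ ?_
    · exact (Measurable.aestronglyMeasurable (continuous_stdPdf.measurable.add
        (continuous_stdPdf.measurable.div ((measurable_id.pow_const 2))))).restrict
    · filter_upwards [ae_restrict_mem measurableSet_Ioi] with z hz
      have hz0 : u < z := hz
      have h1 : (0:ℝ) < z := lt_trans hu hz0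
      have h2 : stdPdf z / z ^ 2 ≤ stdPdf z / u ^ 2 := by
        apply div_le_div_of_nonneg_left (stdPdf_pos z).le (by positivity)
        nlinarith
      have := stdPdf_pos z
      rw [Real.norm_eq_abs, abs_of_pos (by positivity)]
      rw [show (1 + 1/u^2) * stdPdf z = stdPdf z + stdPdf z / u^2 by ring]
      linarith
  have h : ∫ z in Set.Ioi u, (stdPdf z + stdPdf z / z ^ 2)
      ≤ ∫ z in Set.Ioi u, (1 + 1/u^2) * stdPdf z := by
    refine setIntegral_mono_on hint ((integrable_stdPdf.const_mul _).integrableOn)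
      measurableSet_Ioi ?_
    intro z hz
    have hz0 : u < z := hz
    have h1 : (0:ℝ) < z := lt_trans hu hz0
    have h2 : stdPdf z / z ^ 2 ≤ stdPdf z / u ^ 2 := by
      apply div_le_div_of_nonneg_left (stdPdf_pos z).le (by positivity)
      nlinarith
    rw [show (1 + 1/u^2) * stdPdf z = stdPdf z + stdPdf z / u^2 by ring]
    linarith
  rw [integral_mills hu, integral_const_mul] at h
  have hS : ∫ z in Set.Ioi u, stdPdf z = Sfun u := rfl
  rw [hS] at h
  rw [div_le_iff₀ (by positivity)] at h ⊢
  have hSpos := Sfun_pos u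
  have hid : u ^ 2 * (1/u^2) = 1 := by field_simp
  nlinarith [mul_le_mul_of_nonneg_left h hu.le]

lemma integrable_shift (u : ℝ) : Integrable (fun z => (z - u) * stdPdf z) :=
  (integrable_mul_stdPdf.sub (integrable_stdPdf.const_mul u)).congr
    (ae_of_all _ fun z => by simp only [Pi.sub_apply]; ring)

lemma N_eq (u : ℝ) : ∫ z in Set.Ioi u, (z - u) * stdPdf z = stdPdf u - u * Sfun u := by
  have : ∫ z in Set.Ioi u, (z - u) * stdPdf z
      = (∫ z in Set.Ioi u, z * stdPdf z) - ∫ z in Set.Ioi u, u * stdPdf z := by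
    rw [← integral_sub integrable_mul_stdPdf.integrableOn
      ((integrable_stdPdf.const_mul u).integrableOn)]
    exact setIntegral_congr_fun measurableSet_Ioi (fun z _ => by ring)
  rw [this, intAbove, integral_const_mul]
  rfl

lemma N_ge {u δ : ℝ} (hδ : 0 < δ) : δ * Sfun (u + δ) ≤ stdPdf u - u * Sfun u := by
  rw [← N_eq]
  have h1 : ∫ z in Set.Ioi (u + δ), (z - u) * stdPdf z ≤ ∫ z in Set.Ioi u, (z - u) * stdPdf z := by
    refine setIntegral_mono_set (integrable_shift u).integrableOn ?_
      (HasSubset.Subset.eventuallyLE (Ioi_subset_Ioi (by linarith)))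
    filter_upwards [ae_restrict_mem measurableSet_Ioi] with z hz
    have : u < z := hz
    show (0:ℝ) ≤ (z - u) * stdPdf z
    nlinarith [stdPdf_pos z]
  have h2 : δ * Sfun (u + δ) ≤ ∫ z in Set.Ioi (u + δ), (z - u) * stdPdf z := by
    have : ∫ z in Set.Ioi (u + δ), δ * stdPdf z ≤ ∫ z in Set.Ioi (u + δ), (z - u) * stdPdf z := by
      refine setIntegral_mono_on ((integrable_stdPdf.const_mul δ).integrableOn)
        (integrable_shift u).integrableOn measurableSet_Ioi ?_
      intro z hz
      have : u + δ < z := hz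
      nlinarith [stdPdf_pos z]
    rwa [integral_const_mul] at this
  exact le_trans h2 h1

lemma sqrt_two_pi_le_three : Real.sqrt (2 * Real.pi) ≤ 3 := by
  rw [show (3:ℝ) = Real.sqrt (3 ^ 2) by rw [Real.sqrt_sq]; norm_num]
  exact Real.sqrt_le_sqrt (by nlinarith [Real.pi_lt_d2])

lemma one_le_sqrt_two_pi : 1 ≤ Real.sqrt (2 * Real.pi) := by
  rw [show (1:ℝ) = Real.sqrt 1 by simp]
  exact Real.sqrt_le_sqrt (by nlinarith [Real.pi_gt_three])

lemma exp_two_lt : Real.exp 2 < 9 := by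
  have h := Real.exp_one_lt_d9
  rw [show (2:ℝ) = 1 + 1 by norm_num, Real.exp_add]
  nlinarith [Real.exp_pos 1]

lemma exp_three_lt : Real.exp 3 < 25 := by
  have h := Real.exp_one_lt_d9
  rw [show (3:ℝ) = 1 + 1 + 1 by norm_num, Real.exp_add, Real.exp_add]
  nlinarith [Real.exp_pos 1]

lemma exp_neg_two_gt : (1/9 : ℝ) < Real.exp (-2) := by
  rw [Real.exp_neg]
  rw [lt_inv_comm₀ (by norm_num) (Real.exp_pos 2)]
  calc Real.exp 2 < 9 := exp_two_lt
    _ = (1/9 : ℝ)⁻¹ := by norm_num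

lemma stdPdf_two_gt : (1/40 : ℝ) < stdPdf 2 := by
  unfold stdPdf
  rw [show (-(2:ℝ)^2/2) = -2 by norm_num]
  have h1 := exp_neg_two_gt
  have h2 := sqrt_two_pi_le_three
  have h3 : (0:ℝ) < Real.sqrt (2 * Real.pi) := lt_of_lt_of_le one_pos one_le_sqrt_two_pi
  rw [lt_div_iff₀ h3]
  nlinarith

lemma main_neg {u : ℝ} (hu : u < 0) : (1/100 : ℝ) < stdPdf u / Sfun u - u := by
  have hpos : 0 < stdPdf u / Sfun u := div_pos (stdPdf_pos u) (Sfun_pos u)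
  rcases le_or_gt u (-(1/100)) with h | h
  · linarith
  · -- -1/100 < u < 0
    have h1 : Real.exp (-1/2) ≤ Real.exp (-u^2/2) := by
      apply Real.exp_le_exp.mpr; nlinarith
    have h2 : (1/10 : ℝ) < stdPdf u := by
      unfold stdPdf
      have h3 : (0:ℝ) < Real.sqrt (2 * Real.pi) := lt_of_lt_of_le one_pos one_le_sqrt_two_pi
      rw [lt_div_iff₀ h3]
      have h4 : (1/3 : ℝ) < Real.exp (-1/2) := by
        rw [show (-1/2 : ℝ) = -(1/2) by norm_num, Real.exp_neg,
          lt_inv_comm₀ (by norm_num) (Real.exp_pos _)]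
        calc Real.exp (1/2) ≤ Real.exp 1 := Real.exp_le_exp.mpr (by norm_num)
          _ < 2.7182818286 := Real.exp_one_lt_d9
          _ ≤ (1/3:ℝ)⁻¹ := by norm_num
      nlinarith [sqrt_two_pi_le_three]
    have h5 : stdPdf u ≤ stdPdf u / Sfun u := by
      rw [le_div_iff₀ (Sfun_pos u)]
      nlinarith [Sfun_le_one u, Sfun_pos u, stdPdf_pos u]
    linarith

lemma main_up {u : ℝ} (hu : 0 < u) : stdPdf u / Sfun u - u < 10 := by
  have hsq : (0:ℝ) < Real.sqrt (2 * Real.pi) := lt_of_lt_of_le one_pos one_le_sqrt_two_pi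
  rcases le_or_gt u 1 with h | h
  · -- u ≤ 1
    have hS1 : stdPdf 1 / 2 ≤ Sfun 1 := by
      have := mills_lower (u := 1) one_pos
      norm_num at this
      exact this
    have hS : stdPdf 1 / 2 ≤ Sfun u := hS1.trans (Sfun_anti h)
    have hphi : stdPdf u ≤ stdPdf 0 := by
      unfold stdPdf
      exact div_le_div₀ (Real.exp_pos _).le (Real.exp_le_exp.mpr (by nlinarith)) hsq le_rfl
    have hval : stdPdf u / Sfun u ≤ stdPdf 0 / (stdPdf 1 / 2) :=
      div_le_div₀ (stdPdf_pos 0).le hphi (half_pos (stdPdf_pos 1)) hS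
    have hkey : stdPdf 0 / (stdPdf 1 / 2) = 2 * Real.exp (1/2) := by
      unfold stdPdf
      rw [show (-(0:ℝ)^2/2) = 0 by norm_num, show (-(1:ℝ)^2/2) = -(1/2) by norm_num,
        Real.exp_zero, Real.exp_neg]
      rw [eq_comm, mul_comm, eq_div_iff (by positivity)]
      field_simp
    have hexp : Real.exp (1/2) < 3 := by
      calc Real.exp (1/2) ≤ Real.exp 1 := Real.exp_le_exp.mpr (by norm_num)
        _ < 2.7182818286 := Real.exp_one_lt_d9
        _ < 3 := by norm_num
    rw [hkey] at hval
    linarith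
  · -- 1 < u
    have hml := mills_lower hu
    have hnum : stdPdf u / Sfun u ≤ stdPdf u / (u * stdPdf u / (u ^ 2 + 1)) :=
      div_le_div_of_nonneg_left (stdPdf_pos u).le
        (div_pos (mul_pos hu (stdPdf_pos u)) (by positivity)) hml
    have heq : stdPdf u / (u * stdPdf u / (u ^ 2 + 1)) = (u ^ 2 + 1) / u := by
      rw [div_div_eq_mul_div, eq_comm, div_eq_div_iff hu.ne' (mul_pos hu (stdPdf_pos u)).ne']
      ring
    rw [heq] at hnum
    have h1u : (1:ℝ)/u < 1 := by rw [div_lt_one hu]; linarith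
    have hfin : stdPdf u / Sfun u - u ≤ (u ^ 2 + 1) / u - u := by linarith
    have heq2 : (u ^ 2 + 1) / u - u = 1 / u := by field_simp; ring
    rw [heq2] at hfin
    linarith

set_option maxHeartbeats 1000000 in
lemma main_low {u : ℝ} (hu : 0 < u) :
    (1/100 : ℝ) * min 1 (1/u) < stdPdf u / Sfun u - u := by
  have hSu := Sfun_pos u
  have hval : stdPdf u / Sfun u - u = (stdPdf u - u * Sfun u) / Sfun u := by field_simp
  rcases le_or_gt u 1 with h | h
  · -- u ≤ 1, min = 1
    have hmin : min 1 (1/u) = 1 := min_eq_left ((le_div_iff₀ hu).mpr (by linarith))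
    rw [hmin, mul_one, hval]
    have h1 : Sfun 2 ≤ stdPdf u - u * Sfun u := by
      have := N_ge (u := u) (δ := 1) one_pos
      have h2 : Sfun 2 ≤ Sfun (u + 1) := Sfun_anti (by linarith)
      linarith
    have hS2 : (1/100 : ℝ) < Sfun 2 := by
      have := mills_lower (u := 2) two_pos
      have h40 := stdPdf_two_gt
      nlinarith
    calc (1/100 : ℝ) < Sfun 2 := hS2
      _ ≤ Sfun 2 / Sfun u := by
          rw [le_div_iff₀ (Sfun_pos u)]
          nlinarith [Sfun_le_one u, Sfun_pos 2]
      _ ≤ (stdPdf u - u * Sfun u) / Sfun u :=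
          div_le_div₀ (by linarith [Sfun_pos 2]) h1 (Sfun_pos u) le_rfl
  · -- 1 < u
    have hmin : min 1 (1/u) = 1/u := min_eq_right (by rw [div_le_one hu]; linarith)
    rw [hmin, hval]
    set v := u + 1/u with hv
    have hδ : (0:ℝ) < 1/u := by positivity
    have huv : u ≤ v := by rw [hv]; linarith
    have hv2 : v ≤ 2 * u := by
      rw [hv]
      have : 1/u ≤ 1 := by rw [div_le_one hu]; linarith
      linarith
    have hvpos : 0 < v := lt_of_lt_of_le hu huv
    -- numerator lower bound
    have hN : (1/u) * Sfun v ≤ stdPdf u - u * Sfun u := N_ge hδ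
    have hSv : v * stdPdf v / (v ^ 2 + 1) ≤ Sfun v := mills_lower hvpos
    have hsq : (0:ℝ) < Real.sqrt (2 * Real.pi) := lt_of_lt_of_le one_pos one_le_sqrt_two_pi
    -- pdf ratio
    have hexp32 : Real.exp (3/2) < 5 := by
      have h3 := exp_three_lt
      have he : Real.exp (3/2) * Real.exp (3/2) = Real.exp 3 := by
        rw [← Real.exp_add]; norm_num
      nlinarith [Real.exp_pos (3/2)]
    have hratio : stdPdf u / 5 ≤ stdPdf v := by
      have key : Real.exp (-v^2/2) = Real.exp (-u^2/2) * Real.exp (-(1 + 1/(2*u^2))) := by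
        rw [← Real.exp_add]
        congr 1
        rw [hv]
        field_simp
        ring
      have h5 : (1:ℝ)/5 ≤ Real.exp (-(1 + 1/(2*u^2))) := by
        have hu2 : (1:ℝ) ≤ u^2 := by nlinarith
        have ht : (1 + 1/(2*u^2)) ≤ 3/2 := by
          have h2u : 1/(2*u^2) ≤ 1/2 := by
            rw [div_le_div_iff₀ (by positivity) (by norm_num)]
            nlinarith
          linarith
        have h5' : Real.exp (1 + 1/(2*u^2)) ≤ 5 :=
          ((Real.exp_le_exp.mpr ht).trans hexp32.le)
        rw [Real.exp_neg, one_div]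
        exact inv_anti₀ (Real.exp_pos _) h5'
      unfold stdPdf
      rw [div_div, key, div_le_div_iff₀ (by positivity) hsq]
      nlinarith [mul_le_mul_of_nonneg_left h5
        (mul_nonneg (Real.exp_pos (-u^2/2)).le hsq.le), Real.exp_pos (-u^2/2)]
    -- lower bound on Sfun v
    have hv5 : v^2 + 1 ≤ 5 * u^2 := by nlinarith
    have hSv2 : stdPdf u / (25 * u) ≤ Sfun v := by
      have step : u * (stdPdf u / 5) / (5 * u^2) ≤ v * stdPdf v / (v^2 + 1) :=
        div_le_div₀ (mul_nonneg hvpos.le (stdPdf_pos v).le)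
          (mul_le_mul huv hratio (by nlinarith [stdPdf_pos u]) hvpos.le)
          (by nlinarith [sq_nonneg v]) hv5
      have heq3 : u * (stdPdf u / 5) / (5 * u^2) = stdPdf u / (25 * u) := by
        field_simp
        ring
      rw [heq3] at step
      exact step.trans hSv
    -- numerator lower bound
    have hA : stdPdf u / (25 * u^2) ≤ stdPdf u - u * Sfun u := by
      have step : (1/u) * (stdPdf u / (25 * u)) ≤ (1/u) * Sfun v :=
        mul_le_mul_of_nonneg_left hSv2 (by positivity)
      have heq4 : (1/u) * (stdPdf u / (25 * u)) = stdPdf u / (25 * u^2) := by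
        rw [div_mul_div_comm, one_mul]
        congr 1
        ring
      rw [heq4] at step
      exact step.trans hN
    have hB := mills_upper hu
    have hC : stdPdf u / (25 * u^2) / (stdPdf u / u) ≤ (stdPdf u - u * Sfun u) / Sfun u :=
      div_le_div₀ (le_trans (div_nonneg (stdPdf_pos u).le (by nlinarith)) hA) hA (Sfun_pos u) hB
    have heq5 : stdPdf u / (25 * u^2) / (stdPdf u / u) = 1 / (25 * u) := by
      rw [div_div_div_comm, div_self (stdPdf_pos u).ne', div_eq_div_iff (by positivity) (by positivity)]
      field_simp
    rw [heq5] at hC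
    have hfin : (1/100 : ℝ) * (1/u) < 1 / (25 * u) := by
      rw [div_mul_div_comm, one_mul, div_lt_div_iff₀ (by positivity) (by positivity)]
      nlinarith
    linarith

lemma stdPdf_even (z : ℝ) : stdPdf (-z) = stdPdf z := by unfold stdPdf; norm_num

lemma Iio_pdf (c : ℝ) : ∫ z in Set.Iio c, stdPdf z = Sfun (-c) := by
  have h := integral_comp_neg_Ioi (-c) stdPdf
  simp_rw [stdPdf_even] at h
  rw [Sfun, h, neg_neg, integral_Iic_eq_integral_Iio]

lemma Iio_mul (c : ℝ) : ∫ z in Set.Iio c, z * stdPdf z = -stdPdf c := by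
  have h := integral_comp_neg_Ioi (-c) (fun z => z * stdPdf z)
  simp only [stdPdf_even, neg_neg] at h
  rw [← integral_Iic_eq_integral_Iio, ← h]
  have : ∫ x in Set.Ioi (-c), -x * stdPdf x = - ∫ x in Set.Ioi (-c), x * stdPdf x := by
    rw [← integral_neg]
    exact setIntegral_congr_fun measurableSet_Ioi (fun z _ => by ring)
  rw [this, intAbove, stdPdf_even]

/-- **Gap between the posterior mean and the cutoff (binary case).** There are
universal constants `C_l, C_u > 0` such that for every `x ≠ 0`, `m ∈ [-1, 1]` with
`x * m ≠ 0`, and message `a ∈ {-1, 1}`, with `Z` the truncated standard normal mean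
above (resp. below) `-x * m` when `a = 1` (resp. `a = -1`): if `sgn (x*m) * a < 0`
then `C_l * min 1 (1/|x|) < a * (Z + x*m) < C_u`, and if `sgn (x*m) * a > 0` then
`C_l < a * (Z + x*m)`. -/
theorem binary_posterior_mean_gap :
    ∃ Cl Cu : ℝ, 0 < Cl ∧ 0 < Cu ∧
      ∀ x m a : ℝ, x ≠ 0 → -1 ≤ m → m ≤ 1 → x * m ≠ 0 → (a = 1 ∨ a = -1) →
        (sgn (x * m) * a < 0 →
          Cl * min 1 (1 / |x|) <
            a * ((if a = 1 then truncMeanAbove (-(x * m)) else truncMeanBelow (-(x * m))) +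
              x * m) ∧
          a * ((if a = 1 then truncMeanAbove (-(x * m)) else truncMeanBelow (-(x * m))) +
              x * m) < Cu) ∧
        (0 < sgn (x * m) * a →
          Cl <
            a * ((if a = 1 then truncMeanAbove (-(x * m)) else truncMeanBelow (-(x * m))) +
              x * m)) := by
  refine ⟨1/100, 10, by norm_num, by norm_num, fun x m a hx hm1 hm2 hxm ha => ?_⟩
  have hxabs : 0 < |x| := abs_pos.mpr hx
  have habs : |x * m| ≤ |x| := by
    rw [abs_mul]
    calc |x| * |m| ≤ |x| * 1 :=
        mul_le_mul_of_nonneg_left (abs_le.mpr ⟨hm1, hm2⟩) (abs_nonneg x)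
      _ = |x| := mul_one _
  have hmin : ∀ u : ℝ, 0 < u → u ≤ |x| → min 1 (1/|x|) ≤ min 1 (1/u) := fun u hu hle =>
    min_le_min le_rfl (one_div_le_one_div_of_le hu hle)
  have hA : truncMeanAbove (-(x*m)) = stdPdf (-(x*m)) / Sfun (-(x*m)) := by
    rw [truncMeanAbove, intAbove]; rfl
  have hB : truncMeanBelow (-(x*m)) = -stdPdf (x*m) / Sfun (x*m) := by
    rw [truncMeanBelow, Iio_mul, Iio_pdf, neg_neg, stdPdf_even]
  rcases ha with rfl | rfl
  · rw [if_pos rfl]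
    constructor
    · intro hlt
      have ht : x*m < 0 := by
        rcases lt_or_gt_of_ne hxm with h | h
        · exact h
        · rw [sgn, if_pos h] at hlt; norm_num at hlt
      have hu : 0 < -(x*m) := by linarith
      have hule : -(x*m) ≤ |x| := by rw [abs_of_neg ht] at habs; linarith
      constructor
      · calc (1/100:ℝ) * min 1 (1/|x|) ≤ (1/100) * min 1 (1/(-(x*m))) :=
            mul_le_mul_of_nonneg_left (hmin _ hu hule) (by norm_num)
          _ < stdPdf (-(x*m)) / Sfun (-(x*m)) - (-(x*m)) := main_low hu
          _ = 1 * (truncMeanAbove (-(x*m)) + x*m) := by rw [hA]; ring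
      · have h10 := main_up hu
        calc 1 * (truncMeanAbove (-(x*m)) + x*m)
            = stdPdf (-(x*m)) / Sfun (-(x*m)) - (-(x*m)) := by rw [hA]; ring
          _ < 10 := h10
    · intro hgt
      have ht : 0 < x*m := by
        rcases lt_or_gt_of_ne hxm with h | h
        · rw [sgn, if_neg (by linarith)] at hgt; norm_num at hgt
        · exact h
      have hu : -(x*m) < 0 := by linarith
      calc (1/100:ℝ) < stdPdf (-(x*m)) / Sfun (-(x*m)) - (-(x*m)) := main_neg hu
        _ = 1 * (truncMeanAbove (-(x*m)) + x*m) := by rw [hA]; ring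
  · rw [if_neg (by norm_num : (-1:ℝ) ≠ 1)]
    constructor
    · intro hlt
      have ht : 0 < x*m := by
        rcases lt_or_gt_of_ne hxm with h | h
        · rw [sgn, if_neg (by linarith)] at hlt; norm_num at hlt
        · exact h
      have hule : x*m ≤ |x| := by rw [abs_of_pos ht] at habs; linarith
      constructor
      · calc (1/100:ℝ) * min 1 (1/|x|) ≤ (1/100) * min 1 (1/(x*m)) :=
            mul_le_mul_of_nonneg_left (hmin _ ht hule) (by norm_num)
          _ < stdPdf (x*m) / Sfun (x*m) - (x*m) := main_low ht
          _ = -1 * (truncMeanBelow (-(x*m)) + x*m) := by rw [hB]; ring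
      · have h10 := main_up ht
        calc -1 * (truncMeanBelow (-(x*m)) + x*m)
            = stdPdf (x*m) / Sfun (x*m) - (x*m) := by rw [hB]; ring
          _ < 10 := h10
    · intro hgt
      have ht : x*m < 0 := by
        rcases lt_or_gt_of_ne hxm with h | h
        · exact h
        · rw [sgn, if_pos h] at hgt; norm_num at hgt
      calc (1/100:ℝ) < stdPdf (x*m) / Sfun (x*m) - (x*m) := main_neg ht
        _ = -1 * (truncMeanBelow (-(x*m)) + x*m) := by rw [hB]; ring

end
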